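/- arXiv:cs/0608029 — 3 statements merged into one kernel-verified Lean document; each statement's English description precedes it below -/
import Mathlib

section
/- If every vertex y in N(S) has at least two neighbors in S, then the total number of edges between S and N(S) is at least 2|N(S)|; combined with the fact that the number of edges leaving S is exactly d_v·|S| and the expansion bound |N(S)| ≥ δ·d_v·|S| with δ > 1/2, this yields a contradiction. Formally: in a left-d_v-regular bipartite graph, if |N(S)| > |S|·d_v/2 then some vertex of N(S) has exactly one neighbor in S. -/
/-- In a left-`dv`-regular bipartite graph (neighborhoods `Nb : V → Finset C`),
if `|N(S)| > |S| · dv / 2` then some vertex of `N(S)` has exactly one neighbor in `S`. -/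
theorem stmt1 {V C : Type*} [Fintype V] [DecidableEq C]
    (Nb : V → Finset C) (dv : ℕ) (hdeg : ∀ v : V, (Nb v).card = dv)
    (S : Finset V) (h : S.card * dv < 2 * (S.biUnion Nb).card) :
    ∃ y ∈ S.biUnion Nb, (S.filter (fun v => y ∈ Nb v)).card = 1 := by
  by_contra h'
  push_neg at h'
  set T := S.biUnion Nb with hT
  have key : ∑ v ∈ S, (Nb v).card = ∑ y ∈ T, (S.filter (fun v => y ∈ Nb v)).card := by
    have step : ∀ v ∈ S, (Nb v).card = ∑ y ∈ T, if y ∈ Nb v then 1 else 0 := by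
      intro v hv
      rw [← Finset.card_filter]
      congr 1
      rw [Finset.filter_mem_eq_inter, Finset.inter_eq_right.2]
      intro y hy
      exact Finset.mem_biUnion.2 ⟨v, hv, hy⟩
    rw [Finset.sum_congr rfl step, Finset.sum_comm]
    refine Finset.sum_congr rfl fun y _ => ?_
    rw [← Finset.card_filter]
  have hlhs : ∑ v ∈ S, (Nb v).card = S.card * dv := by
    rw [Finset.sum_congr rfl fun v _ => hdeg v, Finset.sum_const, smul_eq_mul]
  have hge : ∀ y ∈ T, 2 ≤ (S.filter (fun v => y ∈ Nb v)).card := by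
    intro y hy
    obtain ⟨v, hv, hyv⟩ := Finset.mem_biUnion.1 hy
    have hpos : 0 < (S.filter (fun v => y ∈ Nb v)).card :=
      Finset.card_pos.2 ⟨v, Finset.mem_filter.2 ⟨hv, hyv⟩⟩
    have hne := h' y hy
    omega
  have hsum : 2 * T.card ≤ ∑ y ∈ T, (S.filter (fun v => y ∈ Nb v)).card := by
    calc 2 * T.card = ∑ _y ∈ T, 2 := by rw [Finset.sum_const, smul_eq_mul, mul_comm]
    _ ≤ _ := Finset.sum_le_sum hge
  have hfin : 2 * T.card ≤ S.card * dv := by rw [← hlhs, key]; exact hsum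
  exact absurd h (not_lt.2 hfin)
end

section
/- Let x be a point of the relaxed polytope of a (d_v, d_c)-regular LDPC code, let V_frac(x) be its set of fractional coordinates and C_frac(x) the set of checks adjacent to at least one fractional coordinate. Then the number of active inequalities at x is at most (m − |C_frac(x)|)·d_c + 2·|C_frac(x)| + n − |V_frac(x)|. -/
/-!
Write the left-hand side of the forbidden-set inequality of `S ⊆ N` as
`∑_{i ∈ N} |x i - 𝟙_S i|`. If the neighbourhood `N` is integral, `S` is tight iff
`S ∆ supp x` is a singleton of `N`, so at most `|N| = d_c` sets are tight. If `S ≠ T` are tight,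
adding the two equalities gives `2 = |S ∆ T| + 2 ∑_{i ∈ N \ S ∆ T} |x i - 𝟙_S i|`; since `|S ∆ T|`
is even and nonzero, every coordinate of `N` outside `S ∆ T` is integral. So a fractional
coordinate lies in `S ∆ T`, `S ∆ U` and `T ∆ U` for any three distinct tight sets, which parity
forbids. Finally, each integral coordinate makes exactly one box inequality active.
-/

open Finset
open scoped symmDiff

theorem Set.ncard_setOf_sigma {ι : Type*} [Fintype ι] {β : ι → Type*} (P : ∀ i, β i → Prop)
    (hP : ∀ i, {b | P i b}.Finite) :
    {p : Σ i, β i | P p.1 p.2}.ncard = ∑ i, {b | P i b}.ncard := by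
  rw [show {p : Σ i, β i | P p.1 p.2} = Finset.univ.sigma fun i => (hP i).toFinset by ext; simp,
    ncard_coe_finset, card_sigma]
  simp [ncard_eq_toFinset_card _ (hP _)]

theorem sum_le_of_le_on_of_le_off {ι : Type*} [Fintype ι] {f : ι → ℕ} (s : Set ι) {a b : ℕ}
    (hs : ∀ i ∈ s, f i ≤ a) (hsc : ∀ i ∉ s, f i ≤ b) :
    ∑ i, f i ≤ (Fintype.card ι - s.ncard) * b + a * s.ncard := by
  classical
  rw [← sum_add_sum_compl s.toFinset, Set.ncard_eq_toFinset_card', ← card_compl, add_comm]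
  refine add_le_add ?_ ?_
  · exact sum_le_card_nsmul _ _ _ fun i hi => hsc i (by simpa using hi)
  · rw [mul_comm]
    exact sum_le_card_nsmul _ _ _ fun i hi => hs i (by simpa using hi)

namespace LPDecoding

theorem ncard_activeBounds_le {α : Type*} [Finite α] (x : α → ℝ) :
    {q : α × Bool | (q.2 = false ∧ x q.1 = 0) ∨ (q.2 = true ∧ x q.1 = 1)}.ncard
      ≤ Nat.card α - {i | 0 < x i ∧ x i < 1}.ncard := by
  rw [← Set.ncard_compl]
  refine Set.ncard_le_ncard_of_injOn Prod.fst ?_ ?_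
  · rintro ⟨i, b⟩ (⟨-, h⟩ | ⟨-, h⟩) <;> simp [h]
  · rintro ⟨i, b⟩ hb ⟨j, c⟩ hc (rfl : i = j)
    rcases hb with ⟨rfl, hb⟩ | ⟨rfl, hb⟩ <;> rcases hc with ⟨rfl, hc⟩ | ⟨rfl, hc⟩ <;>
      simp_all

variable {α : Type*} [DecidableEq α]

/-- `|x i - 𝟙_S i|` whenever `x i ∈ [0, 1]`. -/
def bitDist (S : Finset α) (x : α → ℝ) (i : α) : ℝ := if i ∈ S then 1 - x i else x i

def IsTightOddSet (N : Finset α) (x : α → ℝ) (S : Finset α) : Prop :=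
  S ⊆ N ∧ Odd S.card ∧ ∑ i ∈ N \ S, x i + ∑ i ∈ S, (1 - x i) = 1

theorem sum_bitDist {N S : Finset α} (x : α → ℝ) (hS : S ⊆ N) :
    ∑ i ∈ N, bitDist S x i = ∑ i ∈ N \ S, x i + ∑ i ∈ S, (1 - x i) := by
  rw [← sum_sdiff hS]
  congr 1 <;> refine sum_congr rfl fun i hi => ?_
  · simp [bitDist, (mem_sdiff.mp hi).2]
  · simp [bitDist, hi]

theorem bitDist_nonneg (S : Finset α) {x : α → ℝ} {i : α} (hx : 0 ≤ x i ∧ x i ≤ 1) :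
    0 ≤ bitDist S x i := by
  unfold bitDist; split_ifs <;> linarith

theorem bitDist_pos (S : Finset α) {x : α → ℝ} {i : α} (hx : 0 < x i ∧ x i < 1) :
    0 < bitDist S x i := by
  unfold bitDist; split_ifs <;> linarith

theorem bitDist_add_bitDist_of_mem_symmDiff {S T : Finset α} (x : α → ℝ) {i : α}
    (hi : i ∈ S ∆ T) : bitDist S x i + bitDist T x i = 1 := by
  rcases mem_symmDiff.mp hi with ⟨hS, hT⟩ | ⟨hT, hS⟩ <;> simp [bitDist, hS, hT]

theorem bitDist_eq_of_notMem_symmDiff {S T : Finset α} (x : α → ℝ) {i : α}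
    (hi : i ∉ S ∆ T) : bitDist T x i = bitDist S x i := by
  rw [mem_symmDiff] at hi
  by_cases hS : i ∈ S <;> simp_all [bitDist]

theorem sum_bitDist_add_sum_bitDist {N S T : Finset α} (x : α → ℝ) (hST : S ∆ T ⊆ N) :
    ∑ i ∈ N, bitDist S x i + ∑ i ∈ N, bitDist T x i
      = (S ∆ T).card + 2 * ∑ i ∈ N \ S ∆ T, bitDist S x i := by
  rw [← sum_add_distrib, ← sum_sdiff hST,
    sum_congr rfl fun i hi => bitDist_add_bitDist_of_mem_symmDiff x hi,
    sum_congr rfl fun i hi => by rw [bitDist_eq_of_notMem_symmDiff x (mem_sdiff.mp hi).2]]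
  simp only [sum_const, nsmul_eq_mul, mul_one, ← two_mul, mul_sum]
  ring

theorem even_card_symmDiff {S T : Finset α} (hS : Odd S.card) (hT : Odd T.card) :
    Even (S ∆ T).card := by
  have hsub : S ⊓ T ⊆ S ⊔ T := inf_le_sup
  have := card_union_add_card_inter S T
  have := card_le_card hsub
  rw [symmDiff_eq_sup_sdiff_inf, card_sdiff_of_subset hsub, Nat.even_iff]
  rw [Nat.odd_iff] at hS hT
  simp only [sup_eq_union, inf_eq_inter] at *
  omega

theorem mem_symmDiff_of_isTightOddSet {N S T : Finset α} {x : α → ℝ}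
    (hx : ∀ i ∈ N, 0 ≤ x i ∧ x i ≤ 1) (hS : IsTightOddSet N x S) (hT : IsTightOddSet N x T)
    (hST : S ≠ T) {i₀ : α} (hi₀ : i₀ ∈ N) (hfrac : 0 < x i₀ ∧ x i₀ < 1) : i₀ ∈ S ∆ T := by
  by_contra hi₀D
  have hDN : S ∆ T ⊆ N := symmDiff_le_sup.trans (sup_le hS.1 hT.1)
  have key := sum_bitDist_add_sum_bitDist x hDN
  rw [sum_bitDist x hS.1, sum_bitDist x hT.1, hS.2.2, hT.2.2] at key
  have hpos : 0 < ∑ i ∈ N \ S ∆ T, bitDist S x i :=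
    sum_pos' (fun i hi => bitDist_nonneg S (hx i (mem_sdiff.mp hi).1))
      ⟨i₀, mem_sdiff.mpr ⟨hi₀, hi₀D⟩, bitDist_pos S hfrac⟩
  have hcard : (S ∆ T).card ≠ 1 := fun h => by
    simpa [h] using even_card_symmDiff hS.2.1 hT.2.1
  have hne : (S ∆ T).card ≠ 0 := by simpa [card_eq_zero, symmDiff_eq_bot] using hST
  have : ((S ∆ T).card : ℝ) < 2 := by linarith
  norm_cast at this
  omega

theorem eq_zero_or_eq_one_of_not_frac {t : ℝ} (ht : 0 ≤ t ∧ t ≤ 1) (hfrac : ¬(0 < t ∧ t < 1)) :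
    t = 0 ∨ t = 1 :=
  ht.1.eq_or_lt.imp Eq.symm fun h0 => ht.2.lt_or_eq.resolve_left fun h1 => hfrac ⟨h0, h1⟩

theorem finite_setOf_isTightOddSet (N : Finset α) (x : α → ℝ) :
    {S | IsTightOddSet N x S}.Finite :=
  N.powerset.finite_toSet.subset fun _ hS => mem_powerset.mpr hS.1

theorem ncard_setOf_isTightOddSet_le_two {N : Finset α} {x : α → ℝ}
    (hx : ∀ i ∈ N, 0 ≤ x i ∧ x i ≤ 1) {i₀ : α} (hi₀ : i₀ ∈ N) (hfrac : 0 < x i₀ ∧ x i₀ < 1) :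
    {S | IsTightOddSet N x S}.ncard ≤ 2 := by
  by_contra! h
  obtain ⟨S, hS, T, hT, U, hU, hST, hSU, hTU⟩ :=
    (Set.two_lt_ncard (finite_setOf_isTightOddSet N x)).mp h
  have hST' := mem_symmDiff_of_isTightOddSet hx hS hT hST hi₀ hfrac
  have hSU' := mem_symmDiff_of_isTightOddSet hx hS hU hSU hi₀ hfrac
  have hTU' := mem_symmDiff_of_isTightOddSet hx hT hU hTU hi₀ hfrac
  simp only [mem_symmDiff] at hST' hSU' hTU'
  tauto

theorem sum_bitDist_eq_card_symmDiff {N S : Finset α} {x : α → ℝ}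
    (hx : ∀ i ∈ N, x i = 0 ∨ x i = 1) (hS : S ⊆ N) :
    ∑ i ∈ N, bitDist S x i = (S ∆ N.filter (x · = 1)).card := by
  have hsub : S ∆ N.filter (x · = 1) ⊆ N := symmDiff_le_sup.trans (sup_le hS (filter_subset _ _))
  rw [← inter_eq_right.mpr hsub, ← filter_mem_eq_inter, ← sum_boole]
  refine sum_congr rfl fun i hi => ?_
  rcases hx i hi with h | h <;> by_cases hiS : i ∈ S <;> simp [bitDist, mem_symmDiff, hi, hiS, h]

theorem ncard_setOf_isTightOddSet_le_card {N : Finset α} {x : α → ℝ}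
    (hx : ∀ i ∈ N, x i = 0 ∨ x i = 1) : {S | IsTightOddSet N x S}.ncard ≤ N.card := by
  have hmaps : ∀ S ∈ {S | IsTightOddSet N x S},
      S ∆ N.filter (x · = 1) ∈ (N.powersetCard 1 : Set (Finset α)) := by
    intro S ⟨hSN, _, htight⟩
    have hcard := sum_bitDist_eq_card_symmDiff hx hSN
    rw [sum_bitDist x hSN, htight] at hcard
    exact mem_powersetCard.mpr
      ⟨symmDiff_le_sup.trans (sup_le hSN (filter_subset _ _)), by exact_mod_cast hcard.symm⟩
  calc {S | IsTightOddSet N x S}.ncard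
      ≤ (N.powersetCard 1 : Set (Finset α)).ncard :=
        Set.ncard_le_ncard_of_injOn _ hmaps (symmDiff_left_injective _).injOn
    _ = N.card := by simp

end LPDecoding

open LPDecoding

theorem stmt12_general (n m dc : ℕ)
    (Nb : Fin m → Finset (Fin n)) (hdeg : ∀ j, (Nb j).card = dc)
    (x : Fin n → ℝ)
    (hbox : ∀ i, 0 ≤ x i ∧ x i ≤ 1) :
    {p : Σ _ : Fin m, Finset (Fin n) | p.2 ⊆ Nb p.1 ∧ Odd p.2.card ∧
        ∑ i ∈ Nb p.1 \ p.2, x i + ∑ i ∈ p.2, (1 - x i) = 1}.ncard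
      + {q : Fin n × Bool | (q.2 = false ∧ x q.1 = 0) ∨ (q.2 = true ∧ x q.1 = 1)}.ncard
    ≤ (m - {j : Fin m | ∃ i ∈ Nb j, 0 < x i ∧ x i < 1}.ncard) * dc
      + 2 * {j : Fin m | ∃ i ∈ Nb j, 0 < x i ∧ x i < 1}.ncard
      + (n - {i : Fin n | 0 < x i ∧ x i < 1}.ncard) := by
  have hchecks := sum_le_of_le_on_of_le_off {j : Fin m | ∃ i ∈ Nb j, 0 < x i ∧ x i < 1}
    (f := fun j => {S | IsTightOddSet (Nb j) x S}.ncard)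
    (fun j ⟨i, hi, hfrac⟩ => ncard_setOf_isTightOddSet_le_two (fun i _ => hbox i) hi hfrac)
    (fun j hj => (hdeg j).symm ▸ ncard_setOf_isTightOddSet_le_card fun i hi =>
      eq_zero_or_eq_one_of_not_frac (hbox i) fun hfrac => hj ⟨i, hi, hfrac⟩)
  rw [Fintype.card_fin] at hchecks
  have hbits := ncard_activeBounds_le x
  rw [Nat.card_fin] at hbits
  change {p : Σ _ : Fin m, Finset (Fin n) | IsTightOddSet (Nb p.1) x p.2}.ncard + _ ≤ _
  rw [Set.ncard_setOf_sigma _ fun j => finite_setOf_isTightOddSet (Nb j) x]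
  omega

/-- For any point `x` of the relaxed polytope of a `(dv, dc)`-regular LDPC code, with
`V_frac(x)` its set of fractional coordinates and `C_frac(x)` the set of checks adjacent
to a fractional coordinate, the number of active inequalities at `x` is at most
`(m - |C_frac|)·dc + 2·|C_frac| + n - |V_frac|`. -/
theorem stmt12 (n m dc : ℕ)
    (Nb : Fin m → Finset (Fin n)) (hdeg : ∀ j, (Nb j).card = dc)
    (x : Fin n → ℝ)
    (hbox : ∀ i, 0 ≤ x i ∧ x i ≤ 1)
    (hforb : ∀ j, ∀ S ⊆ Nb j, Odd S.card →
      1 ≤ ∑ i ∈ Nb j \ S, x i + ∑ i ∈ S, (1 - x i)) :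
    {p : Σ _ : Fin m, Finset (Fin n) | p.2 ⊆ Nb p.1 ∧ Odd p.2.card ∧
        ∑ i ∈ Nb p.1 \ p.2, x i + ∑ i ∈ p.2, (1 - x i) = 1}.ncard
      + {q : Fin n × Bool | (q.2 = false ∧ x q.1 = 0) ∨ (q.2 = true ∧ x q.1 = 1)}.ncard
    ≤ (m - {j : Fin m | ∃ i ∈ Nb j, 0 < x i ∧ x i < 1}.ncard) * dc
      + 2 * {j : Fin m | ∃ i ∈ Nb j, 0 < x i ∧ x i < 1}.ncard
      + (n - {i : Fin n | 0 < x i ∧ x i < 1}.ncard) :=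
  stmt12_general n m dc Nb hdeg x hbox
end

section
/- For an (α, δ)-expander code with δ > 1/2 and left degree d_v, every fractional pseudocodeword x (vertex of the relaxed polytope with at least one fractional coordinate) satisfies |V_frac(x)| ≥ αn, i.e., the set of fractional coordinates has size at least αn. -/
/-!
Let `F` be the set of fractional coordinates of `x`. The forbidden-set inequalities of a single
check force that no check sees exactly one coordinate `a` of `F`: otherwise take for `S` the
coordinates of that check equal to `1`, with `a` added if needed to make `|S|` odd; the
inequality for `S` then reads `1 ≤ x a` or `1 ≤ 1 - x a`. Hence every check in `N(F)` has at least two neighbours in `F`, and double counting gives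
`2 |N(F)| ≤ d_v |F|`. If `|F| < αn`, expansion gives `δ d_v |F| ≤ |N(F)|`, which contradicts
`δ > 1/2` as soon as `d_v |F| > 0`. That `d_v > 0` is where extremality enters: a fractional
coordinate lying in no check can be moved both ways inside the polytope.
-/

open Finset

variable {ι κ : Type*}

noncomputable def fracSupport [Fintype ι] (x : ι → ℝ) : Finset ι :=
  univ.filter fun i => 0 < x i ∧ x i < 1

theorem eq_zero_of_sub_mem_of_add_mem_of_mem_extremePoints {𝕜 E : Type*} [Field 𝕜]
    [LinearOrder 𝕜] [IsStrictOrderedRing 𝕜] [AddCommGroup E] [Module 𝕜 E] {A : Set E}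
    {x v : E} (hx : x ∈ A.extremePoints 𝕜) (hsub : x - v ∈ A) (hadd : x + v ∈ A) : v = 0 := by
  have hmid : x ∈ openSegment 𝕜 (x - v) (x + v) := by
    refine ⟨1 / 2, 1 / 2, by norm_num, by norm_num, by norm_num, ?_⟩
    module
  simpa using hx.2 hsub hadd hmid

theorem two_mul_card_biUnion_le_sum_card [DecidableEq κ] (F : Finset ι) (Nv : ι → Finset κ)
    (h : ∀ j ∈ F.biUnion Nv, 2 ≤ (F.filter (j ∈ Nv ·)).card) :
    2 * (F.biUnion Nv).card ≤ ∑ i ∈ F, (Nv i).card := by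
  calc 2 * (F.biUnion Nv).card = ∑ j ∈ F.biUnion Nv, 2 := by rw [sum_const, smul_eq_mul, mul_comm]
    _ ≤ ∑ j ∈ F.biUnion Nv, (F.filter (j ∈ Nv ·)).card := sum_le_sum h
    _ = ∑ i ∈ F, ((F.biUnion Nv).filter (· ∈ Nv i)).card :=
      (sum_card_bipartiteAbove_eq_sum_card_bipartiteBelow (r := fun i j => j ∈ Nv i)).symm
    _ = ∑ i ∈ F, (Nv i).card := sum_congr rfl fun i hi => by
      rw [filter_mem_eq_inter, inter_eq_right.mpr (subset_biUnion_of_mem Nv hi)]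

section RelaxedPolytope

variable [DecidableEq ι]

def relaxedPolytope (Nb : κ → Finset ι) : Set (ι → ℝ) :=
  {x | (∀ i, 0 ≤ x i ∧ x i ≤ 1) ∧
    ∀ j, ∀ S ⊆ Nb j, Odd S.card → 1 ≤ ∑ i ∈ Nb j \ S, x i + ∑ i ∈ S, (1 - x i)}

theorem sum_sdiff_add_sum_one_sub {C S : Finset ι} (hS : S ⊆ C) (x : ι → ℝ) :
    ∑ i ∈ C \ S, x i + ∑ i ∈ S, (1 - x i) = ∑ i ∈ C, if i ∈ S then 1 - x i else x i := by
  rw [sum_ite, filter_mem_eq_inter, inter_eq_right.mpr hS, filter_notMem_eq_sdiff, add_comm]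

theorem card_filter_frac_ne_one {C : Finset ι} {x : ι → ℝ}
    (hbox : ∀ i ∈ C, 0 ≤ x i ∧ x i ≤ 1)
    (hodd : ∀ S ⊆ C, Odd S.card → 1 ≤ ∑ i ∈ C \ S, x i + ∑ i ∈ S, (1 - x i)) :
    (C.filter fun i => 0 < x i ∧ x i < 1).card ≠ 1 := by
  intro hone
  obtain ⟨a, ha⟩ := card_eq_one.mp hone
  obtain ⟨haC, ha₀, ha₁⟩ := mem_filter.mp (ha ▸ mem_singleton_self a)
  have hint : ∀ i ∈ C, i ≠ a → x i = 0 ∨ x i = 1 := by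
    intro i hiC hia
    by_contra! hfrac
    have hi : i ∈ C.filter fun i => 0 < x i ∧ x i < 1 :=
      mem_filter.mpr ⟨hiC, (hbox i hiC).1.lt_of_ne' hfrac.1, (hbox i hiC).2.lt_of_ne hfrac.2⟩
    exact hia (mem_singleton.mp (ha ▸ hi))
  set T := C.filter fun i => x i = 1
  have haT : a ∉ T := fun h => ha₁.ne (mem_filter.mp h).2
  -- Off `a` every term of the forbidden-set sum of such an `S` vanishes; the `a`-term is `< 1`.
  have hcontra : ∀ S ⊆ C, (∀ i ∈ C, i ≠ a → (i ∈ S ↔ i ∈ T)) → Odd S.card → False := by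
    intro S hSC hST hSodd
    have h := hodd S hSC hSodd
    rw [sum_sdiff_add_sum_one_sub hSC, sum_eq_single_of_mem a haC] at h
    · split_ifs at h <;> linarith
    · intro i hiC hia
      rcases hint i hiC hia with h0 | h1
      · have : i ∉ S := by simp [hST i hiC hia, T, h0]
        simp [this, h0]
      · have : i ∈ S := by simp [hST i hiC hia, T, hiC, h1]
        simp [this, h1]
  rcases Nat.even_or_odd T.card with hev | hodd'
  · refine hcontra (insert a T) (insert_subset haC (filter_subset _ _))
      (fun i _ hia => by simp [hia]) ?_
    rw [card_insert_of_notMem haT]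
    exact hev.add_one
  · exact hcontra T (filter_subset _ _) (fun _ _ _ => Iff.rfl) hodd'

theorem exists_mem_of_mem_extremePoints_relaxedPolytope {Nb : κ → Finset ι} {x : ι → ℝ}
    (hx : x ∈ (relaxedPolytope Nb).extremePoints ℝ) {i₀ : ι} (h₀ : 0 < x i₀) (h₁ : x i₀ < 1) :
    ∃ j, i₀ ∈ Nb j := by
  by_contra! hfree
  obtain ⟨hbox, hchecks⟩ := hx.1
  set ε := min (x i₀) (1 - x i₀)
  have hε : 0 < ε := lt_min h₀ (by linarith)
  have hmem : ∀ s : ℝ, |s| ≤ ε → x + Pi.single i₀ s ∈ relaxedPolytope Nb := by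
    intro s hs
    have hunchanged : ∀ j, ∀ i ∈ Nb j, (x + Pi.single i₀ s : ι → ℝ) i = x i := fun j i hi => by
      simp [show i ≠ i₀ from fun h => hfree j (h ▸ hi)]
    refine ⟨fun i => ?_, fun j S hS hSodd => ?_⟩
    · rcases eq_or_ne i i₀ with rfl | hi
      · have := abs_le.mp hs
        have := min_le_left (x i) (1 - x i)
        have := min_le_right (x i) (1 - x i)
        simp only [Pi.add_apply, Pi.single_eq_same]
        constructor <;> linarith
      · simpa [Pi.single_apply, hi] using hbox i
    · rw [sum_congr rfl fun i hi => hunchanged j i (sdiff_subset hi),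
        sum_congr rfl fun i hi => congrArg (1 - ·) (hunchanged j i (hS hi))]
      exact hchecks j S hS hSodd
  have hzero := eq_zero_of_sub_mem_of_add_mem_of_mem_extremePoints hx
    (by simpa [sub_eq_add_neg, Pi.single_neg] using hmem (-ε) (by simp [abs_of_pos hε]))
    (hmem ε (abs_of_pos hε).le)
  exact hε.ne' (by simpa using congrFun hzero i₀)

theorem two_le_card_filter_fracSupport [Fintype ι] [DecidableEq κ]
    {Nv : ι → Finset κ} {Nb : κ → Finset ι} (hadj : ∀ i j, j ∈ Nv i ↔ i ∈ Nb j)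
    {x : ι → ℝ} (hx : x ∈ relaxedPolytope Nb) {j : κ} (hj : j ∈ (fracSupport x).biUnion Nv) :
    2 ≤ ((fracSupport x).filter (j ∈ Nv ·)).card := by
  have hfilter : (fracSupport x).filter (j ∈ Nv ·) = (Nb j).filter fun i => 0 < x i ∧ x i < 1 := by
    ext i; simp [fracSupport, hadj, and_comm]
  obtain ⟨i, hiF, hji⟩ := mem_biUnion.mp hj
  have hpos : 0 < ((fracSupport x).filter (j ∈ Nv ·)).card :=
    card_pos.mpr ⟨i, mem_filter.mpr ⟨hiF, hji⟩⟩
  have hne := card_filter_frac_ne_one (fun i _ => hx.1 i) (hx.2 j)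
  rw [← hfilter] at hne
  omega

end RelaxedPolytope

theorem stmt13_general (n m dv : ℕ)
    (Nv : Fin n → Finset (Fin m)) (hdv : ∀ i, (Nv i).card = dv)
    (Nb : Fin m → Finset (Fin n))
    (hadj : ∀ i j, j ∈ Nv i ↔ i ∈ Nb j)
    (α δ : ℝ) (hδ : 1 / 2 < δ)
    (hexp : ∀ S : Finset (Fin n), (S.card : ℝ) ≤ α * n →
      δ * dv * S.card ≤ ((S.biUnion Nv).card : ℝ))
    (P : Set (Fin n → ℝ))
    (hP : P = {x | (∀ i, 0 ≤ x i ∧ x i ≤ 1) ∧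
      ∀ j, ∀ S ⊆ Nb j, Odd S.card →
        1 ≤ ∑ i ∈ Nb j \ S, x i + ∑ i ∈ S, (1 - x i)})
    (x : Fin n → ℝ) (hx : x ∈ Set.extremePoints ℝ P)
    (hfrac : ∃ i, 0 < x i ∧ x i < 1) :
    α * n ≤ ({i : Fin n | 0 < x i ∧ x i < 1}.ncard : ℝ) := by
  rw [hP] at hx
  change x ∈ (relaxedPolytope Nb).extremePoints ℝ at hx
  obtain ⟨i₀, h₀, h₁⟩ := hfrac
  set F := fracSupport x
  have hi₀F : i₀ ∈ F := by simp [F, fracSupport, h₀, h₁]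
  rw [show {i : Fin n | 0 < x i ∧ x i < 1} = F by ext; simp [F, fracSupport], Set.ncard_coe_finset]
  by_contra! hsmall
  obtain ⟨j₀, hj₀⟩ := exists_mem_of_mem_extremePoints_relaxedPolytope hx h₀ h₁
  have hdv_pos : 0 < dv := hdv i₀ ▸ card_pos.mpr ⟨j₀, (hadj i₀ j₀).mpr hj₀⟩
  have hdouble : 2 * (F.biUnion Nv).card ≤ dv * F.card :=
    (two_mul_card_biUnion_le_sum_card F Nv fun _ hj =>
      two_le_card_filter_fracSupport hadj hx.1 hj).trans_eq (by simp [hdv, mul_comm])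
  have hexpF := hexp F hsmall.le
  have hmass : (1 : ℝ) ≤ dv * F.card := by
    exact_mod_cast Nat.mul_le_mul hdv_pos (card_pos.mpr ⟨i₀, hi₀F⟩)
  have hdouble' : (2 : ℝ) * (F.biUnion Nv).card ≤ dv * F.card := by exact_mod_cast hdouble
  nlinarith

/-- For an `(α, δ)`-expander code with `δ > 1/2` and left degree `dv`, every fractional
pseudocodeword `x` (vertex of the relaxed polytope with at least one fractional
coordinate) has fractional support of size at least `αn`. -/
theorem stmt13 (n m dv dc : ℕ)
    (Nv : Fin n → Finset (Fin m)) (hdv : ∀ i, (Nv i).card = dv)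
    (Nb : Fin m → Finset (Fin n)) (hdc : ∀ j, (Nb j).card = dc)
    (hadj : ∀ i j, j ∈ Nv i ↔ i ∈ Nb j)
    (α δ : ℝ) (hα : 0 < α) (hδ : 1 / 2 < δ) (hδ1 : δ ≤ 1)
    (hexp : ∀ S : Finset (Fin n), (S.card : ℝ) ≤ α * n →
      δ * dv * S.card ≤ ((S.biUnion Nv).card : ℝ))
    (P : Set (Fin n → ℝ))
    (hP : P = {x | (∀ i, 0 ≤ x i ∧ x i ≤ 1) ∧
      ∀ j, ∀ S ⊆ Nb j, Odd S.card →
        1 ≤ ∑ i ∈ Nb j \ S, x i + ∑ i ∈ S, (1 - x i)})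
    (x : Fin n → ℝ) (hx : x ∈ Set.extremePoints ℝ P)
    (hfrac : ∃ i, 0 < x i ∧ x i < 1) :
    α * n ≤ ({i : Fin n | 0 < x i ∧ x i < 1}.ncard : ℝ) :=
  stmt13_general n m dv Nv hdv Nb hadj α δ hδ hexp P hP x hx hfrac
end
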